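/- Consider the task-relevant equilibrium equations of a star-connected thalamocortical network: x_i^1 = [W_{i,i}^{11} x_i^1 + W_{i,T}^{11} x_T^1 + c_i^1]_0^{m_i^1} for i = 2,…,N, together with the thalamic equation determining x_T^1. Suppose two cortical layers i, j ∈ {2,…,N} have identical task-relevant data: W_{i,i}^{11} = W_{j,j}^{11}, W_{i,T}^{11} = W_{j,T}^{11}, c_i^1 = c_j^1 and m_i^1 = m_j^1, and that ρ(|W_{i,i}^{11}|) < 1 (so that for each fixed thalamic state x_T^1 the layer fixed-point equation y = [W_{i,i}^{11} y + W_{i,T}^{11} x_T^1 + c_i^1]_0^{m_i^1} has a unique solution). Then any solution of the full equilibrium system satisfies x_i^{1*} = x_j^{1*}; i.e., the two cortical regions are remotely synchronized at equilibrium despite having no direct link. -/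

import Mathlib

open Matrix

noncomputable section

/-- componentwise clamping of `x` to the box `[0, m]` -/
def clamp {ι : Type*} (m x : ι → ℝ) : ι → ℝ := fun k => min (max (x k) 0) (m k)

/-- entrywise absolute value of a matrix -/
def eAbs {α β : Type*} (A : Matrix α β ℝ) : Matrix α β ℝ := Matrix.of fun k l => |A k l|

/-- spectral radius of a real matrix: the largest modulus of its (complex) spectrum -/
def specRad {ι : Type*} [Fintype ι] [DecidableEq ι] (A : Matrix ι ι ℝ) : ℝ :=
  sSup ((fun z : ℂ => ‖z‖) '' spectrum ℂ (A.map (fun a : ℝ => (a : ℂ))))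

/-! Layers `i` and `j` solve the same fixed-point equation `y = [W y + b]_0^m` with the same
thalamic input `b = W_{i,T} x_T + c`, so it suffices that this equation has at most one solution.
Clamping is 1-Lipschitz in each coordinate, so the difference `d = |y - y'|` of two solutions
satisfies `0 ≤ d ≤ |W| d`, hence `d ≤ |W|^k d` for every `k`. By Gelfand's formula `ρ(|W|) < 1`
forces `|W|^k → 0`, so `d = 0`. -/

open Filter Topology
open scoped ENNReal NNReal

section GelfandFormula

variable {A : Type*} [NormedRing A] [NormedAlgebra ℂ A] [CompleteSpace A]

theorem tendsto_pow_nhds_zero_of_spectralRadius_lt_one {a : A} (ha : spectralRadius ℂ a < 1) :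
    Tendsto (a ^ ·) atTop (𝓝 0) := by
  obtain ⟨r, har, hr1⟩ := exists_between ha
  have hr : r ≠ ⊤ := ne_top_of_lt hr1
  have hgelfand := spectrum.pow_nnnorm_pow_one_div_tendsto_nhds_spectralRadius a
  have hbound : ∀ᶠ n : ℕ in atTop, ‖a ^ n‖ ≤ r.toReal ^ n := by
    filter_upwards [hgelfand.eventually_lt_const har, eventually_ge_atTop 1] with n hn hn1
    have hn0 : (n : ℝ) ≠ 0 := by positivity
    have hle : (‖a ^ n‖₊ : ℝ≥0∞) ≤ r ^ n := by
      calc (‖a ^ n‖₊ : ℝ≥0∞) = ((‖a ^ n‖₊ : ℝ≥0∞) ^ (1 / n : ℝ)) ^ n := by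
            rw [← ENNReal.rpow_natCast, ← ENNReal.rpow_mul, one_div_mul_cancel hn0,
              ENNReal.rpow_one]
        _ ≤ r ^ n := pow_le_pow_left' hn.le n
    rw [← ENNReal.toReal_pow]
    exact ENNReal.toReal_mono (ENNReal.pow_ne_top hr) hle
  refine squeeze_zero_norm' hbound ?_
  exact tendsto_pow_atTop_nhds_zero_of_lt_one ENNReal.toReal_nonneg
    (ENNReal.toReal_lt_of_lt_ofReal (by simpa using hr1))

end GelfandFormula

namespace Matrix

theorem mulVec_mono_of_nonneg {m n R : Type*} [Fintype n] [Semiring R] [PartialOrder R]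
    [IsOrderedRing R] {A : Matrix m n R} (hA : ∀ k l, 0 ≤ A k l) {u v : n → R} (huv : u ≤ v) :
    A *ᵥ u ≤ A *ᵥ v := fun k =>
  dotProduct_le_dotProduct_of_nonneg_left huv (hA k)

variable {n : Type*} [Fintype n] [DecidableEq n]

attribute [local instance] Matrix.linftyOpNormedRing Matrix.linftyOpNormedAlgebra

theorem spectralRadius_map_ofReal_lt_one {A : Matrix n n ℝ} (hA : specRad A < 1) :
    spectralRadius ℂ (A.map ((↑) : ℝ → ℂ)) < 1 := by
  set B := A.map ((↑) : ℝ → ℂ)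
  have hbdd : BddAbove ((fun z : ℂ => ‖z‖) '' spectrum ℂ B) :=
    ((spectrum.isCompact B).image continuous_norm).bddAbove
  refine lt_of_le_of_lt (iSup₂_le fun z hz => ?_) (ENNReal.ofReal_lt_one.mpr hA)
  rw [← ENNReal.ofReal_coe_nnreal, coe_nnnorm]
  exact ENNReal.ofReal_le_ofReal (le_csSup hbdd ⟨z, hz, rfl⟩)

theorem tendsto_pow_nhds_zero_of_specRad_lt_one {A : Matrix n n ℝ} (hA : specRad A < 1) :
    Tendsto (A ^ ·) atTop (𝓝 0) := by
  have : CompleteSpace (Matrix n n ℂ) := FiniteDimensional.complete ℂ _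
  have hB : Tendsto ((A.map ((↑) : ℝ → ℂ)) ^ ·) atTop (𝓝 0) :=
    tendsto_pow_nhds_zero_of_spectralRadius_lt_one (spectralRadius_map_ofReal_lt_one hA)
  have hre : Continuous fun M : Matrix n n ℂ => M.map Complex.re :=
    continuous_id.matrix_map Complex.continuous_re
  have hpow : ∀ k : ℕ, A ^ k = ((A.map ((↑) : ℝ → ℂ)) ^ k).map Complex.re := fun k => by
    have hmap : (A ^ k).map ((↑) : ℝ → ℂ) = A.map (↑) ^ k :=
      map_pow Complex.ofRealHom.mapMatrix A k
    rw [← hmap, map_map]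
    exact (map_id (A ^ k)).symm
  have hlim := (hre.tendsto 0).comp hB
  rw [Matrix.map_zero _ Complex.zero_re] at hlim
  simp only [hpow]
  exact hlim

theorem eq_zero_of_le_mulVec_of_specRad_lt_one {A : Matrix n n ℝ} (hA : ∀ k l, 0 ≤ A k l)
    (hρ : specRad A < 1) {d : n → ℝ} (hd : 0 ≤ d) (hdA : d ≤ A *ᵥ d) : d = 0 := by
  have hiter : ∀ k : ℕ, d ≤ A ^ k *ᵥ d := by
    intro k
    induction k with
    | zero => simp
    | succ k ih =>
      calc d ≤ A *ᵥ d := hdA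
        _ ≤ A *ᵥ (A ^ k *ᵥ d) := mulVec_mono_of_nonneg hA ih
        _ = A ^ (k + 1) *ᵥ d := by rw [mulVec_mulVec, pow_succ']
  have hlim : Tendsto (fun k : ℕ => A ^ k *ᵥ d) atTop (𝓝 0) := by
    simpa [Function.comp_def] using ((continuous_id.matrix_mulVec continuous_const).tendsto 0).comp
      (tendsto_pow_nhds_zero_of_specRad_lt_one hρ)
  exact le_antisymm (ge_of_tendsto' hlim hiter) hd

end Matrix

theorem abs_clamp_sub_clamp_le {ι : Type*} (m x y : ι → ℝ) :
    |clamp m x - clamp m y| ≤ |x - y| := fun k => by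
  calc |min (max (x k) 0) (m k) - min (max (y k) 0) (m k)|
      ≤ max |max (x k) 0 - max (y k) 0| |m k - m k| := abs_min_sub_min_le_max _ _ _ _
    _ ≤ |x k - y k| := by
      rw [sub_self, abs_zero]
      exact max_le (abs_max_sub_max_le_abs _ _ _) (abs_nonneg _)

theorem abs_mulVec_le_eAbs_mulVec_abs {m n : Type*} [Fintype n] (A : Matrix m n ℝ) (v : n → ℝ) :
    |A *ᵥ v| ≤ eAbs A *ᵥ |v| := fun k => by
  calc |∑ l, A k l * v l| ≤ ∑ l, |A k l * v l| := Finset.abs_sum_le_sum_abs _ _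
    _ = ∑ l, |A k l| * |v l| := by simp only [abs_mul]

theorem clamp_fixedPoint_unique {n : Type*} [Fintype n] [DecidableEq n] {A : Matrix n n ℝ}
    (hρ : specRad (eAbs A) < 1) {m b y y' : n → ℝ}
    (hy : y = clamp m (A *ᵥ y + b)) (hy' : y' = clamp m (A *ᵥ y' + b)) : y = y' := by
  have hcontr : |y - y'| ≤ eAbs A *ᵥ |y - y'| :=
    calc |y - y'| = |clamp m (A *ᵥ y + b) - clamp m (A *ᵥ y' + b)| := by rw [← hy, ← hy']
      _ ≤ |A *ᵥ y + b - (A *ᵥ y' + b)| := abs_clamp_sub_clamp_le _ _ _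
      _ = |A *ᵥ (y - y')| := by rw [add_sub_add_right_eq_sub, mulVec_sub]
      _ ≤ eAbs A *ᵥ |y - y'| := abs_mulVec_le_eAbs_mulVec_abs _ _
  have hzero := eq_zero_of_le_mulVec_of_specRad_lt_one (fun k l => abs_nonneg (A k l)) hρ
    (abs_nonneg _) hcontr
  funext k
  simpa [sub_eq_zero] using congrFun hzero k

theorem clamp_fixedPoint_comp_equiv {ι κ : Type*} [Fintype ι] [Fintype κ] {A : Matrix κ κ ℝ}
    {m b y : κ → ℝ} (hy : y = clamp m (A *ᵥ y + b)) (e : ι ≃ κ) :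
    y ∘ e = clamp (m ∘ e) (A.submatrix e e *ᵥ (y ∘ e) + b ∘ e) := by
  rw [submatrix_mulVec_equiv, Function.comp_assoc, Equiv.self_comp_symm, Function.comp_id]
  conv_lhs => rw [hy]
  rfl

theorem remote_synchronization_star_network_general {N : ℕ} (s : ℕ → ℕ) (sT : ℕ)
    (i j : ℕ) (hi2 : 2 ≤ i) (hiN : i ≤ N) (hj2 : 2 ≤ j) (hjN : j ≤ N)
    (hsij : s i = s j)
    (W11 : (l : ℕ) → Matrix (Fin (s l)) (Fin (s l)) ℝ)
    (W1T : (l : ℕ) → Matrix (Fin (s l)) (Fin sT) ℝ)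
    (c1 : (l : ℕ) → Fin (s l) → ℝ) (m1 : (l : ℕ) → Fin (s l) → ℝ)
    -- identical task-relevant data of the layers i and j
    (hWeq : ∀ (a b : Fin (s i)), W11 i a b = W11 j (Fin.cast hsij a) (Fin.cast hsij b))
    (hWTeq : ∀ (a : Fin (s i)) (l : Fin sT), W1T i a l = W1T j (Fin.cast hsij a) l)
    (hceq : ∀ a : Fin (s i), c1 i a = c1 j (Fin.cast hsij a))
    (hmeq : ∀ a : Fin (s i), m1 i a = m1 j (Fin.cast hsij a))
    -- uniqueness of the layer fixed point for each fixed thalamic state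
    (hρ : specRad (eAbs (W11 i)) < 1)
    -- a solution of the full task-relevant equilibrium system
    (x1 : (l : ℕ) → Fin (s l) → ℝ) (xT1 : Fin sT → ℝ)
    (hlayer : ∀ l, 2 ≤ l → l ≤ N →
      x1 l = clamp (m1 l) (W11 l *ᵥ x1 l + W1T l *ᵥ xT1 + c1 l)) :
    ∀ a : Fin (s i), x1 i a = x1 j (Fin.cast hsij a) := by
  let e := finCongr hsij
  have hW : W11 i = (W11 j).submatrix e e := Matrix.ext hWeq
  have hb : W1T i *ᵥ xT1 + c1 i = (W1T j *ᵥ xT1 + c1 j) ∘ e := by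
    have hWT : W1T i = (W1T j).submatrix e id := Matrix.ext hWTeq
    funext a
    simp [hWT, hceq, e, Matrix.mulVec, dotProduct]
  have hm : m1 i = m1 j ∘ e := funext hmeq
  have hxi : x1 i = clamp (m1 i) (W11 i *ᵥ x1 i + (W1T i *ᵥ xT1 + c1 i)) := by
    rw [← add_assoc]; exact hlayer i hi2 hiN
  have hxj : x1 j ∘ e = clamp (m1 i) (W11 i *ᵥ (x1 j ∘ e) + (W1T i *ᵥ xT1 + c1 i)) := by
    rw [hW, hb, hm]
    exact clamp_fixedPoint_comp_equiv (by rw [← add_assoc]; exact hlayer j hj2 hjN) e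
  exact congrFun (clamp_fixedPoint_unique hρ hxi hxj)

/-- Remote synchronization in star-connected thalamocortical networks: if two cortical
layers `i` and `j` have identical task-relevant data (`W_{i,i}^{11} = W_{j,j}^{11}`,
`W_{i,T}^{11} = W_{j,T}^{11}`, `c_i^1 = c_j^1`, `m_i^1 = m_j^1`) and
`ρ(|W_{i,i}^{11}|) < 1`, then any solution of the full task-relevant equilibrium system
satisfies `x_i^{1*} = x_j^{1*}`. -/
theorem remote_synchronization_star_network {N : ℕ} (s : ℕ → ℕ) (sT : ℕ)
    (i j : ℕ) (hi2 : 2 ≤ i) (hiN : i ≤ N) (hj2 : 2 ≤ j) (hjN : j ≤ N)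
    (hsij : s i = s j)
    (W11 : (l : ℕ) → Matrix (Fin (s l)) (Fin (s l)) ℝ)
    (W1T : (l : ℕ) → Matrix (Fin (s l)) (Fin sT) ℝ)
    (c1 : (l : ℕ) → Fin (s l) → ℝ) (m1 : (l : ℕ) → Fin (s l) → ℝ)
    (WT : Matrix (Fin sT) (Fin sT) ℝ)
    (WT1 : (l : ℕ) → Matrix (Fin sT) (Fin (s l)) ℝ)
    (cT mT : Fin sT → ℝ)
    (hm : ∀ l kk, 0 < m1 l kk) (hmT : ∀ kk, 0 < mT kk)
    -- identical task-relevant data of the layers i and j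
    (hWeq : ∀ (a b : Fin (s i)), W11 i a b = W11 j (Fin.cast hsij a) (Fin.cast hsij b))
    (hWTeq : ∀ (a : Fin (s i)) (l : Fin sT), W1T i a l = W1T j (Fin.cast hsij a) l)
    (hceq : ∀ a : Fin (s i), c1 i a = c1 j (Fin.cast hsij a))
    (hmeq : ∀ a : Fin (s i), m1 i a = m1 j (Fin.cast hsij a))
    -- uniqueness of the layer fixed point for each fixed thalamic state
    (hρ : specRad (eAbs (W11 i)) < 1)
    -- a solution of the full task-relevant equilibrium system
    (x1 : (l : ℕ) → Fin (s l) → ℝ) (xT1 : Fin sT → ℝ)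
    (hlayer : ∀ l, 2 ≤ l → l ≤ N →
      x1 l = clamp (m1 l) (W11 l *ᵥ x1 l + W1T l *ᵥ xT1 + c1 l))
    (hthal : xT1 = clamp mT (WT *ᵥ xT1 + (∑ l ∈ Finset.Icc 1 N, WT1 l *ᵥ x1 l) + cT)) :
    ∀ a : Fin (s i), x1 i a = x1 j (Fin.cast hsij a) :=
  remote_synchronization_star_network_general s sT i j hi2 hiN hj2 hjN hsij W11 W1T c1 m1 hWeq hWTeq
    hceq hmeq hρ x1 xT1 hlayer
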